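/- Let a₁, a₂ be real with a₁² + a₂² = 1, and consider the four orthonormal states of C²⊗C²: a₁|00⟩+a₂|11⟩, −a₂|00⟩+a₁|11⟩, a₁|01⟩+a₂|10⟩, −a₂|01⟩+a₁|10⟩, taken with equal prior probabilities 1/4. If Alice and Bob each measure their qubit in the computational basis {|0⟩,|1⟩}, the resulting classical mutual information between the signal label and the pair of outcomes equals 2 − h(a₁²), where h is the binary entropy. Since each signal state has entanglement h(a₁²), this ensemble saturates the bound I_acc^LOCC ≤ n − Ē with n = 2 and Ē = h(a₁²). -/

import Mathlib

open Matrix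
open scoped Kronecker ComplexOrder

noncomputable section

namespace LAI

/-- Shannon entropy (base 2) of a finitely supported distribution. -/
def shannon {α : Type*} [Fintype α] (p : α → ℝ) : ℝ :=
  -∑ a, p a * Real.logb 2 (p a)

open scoped Classical in
/-- von Neumann entropy (base 2) of a matrix (via eigenvalues of a Hermitian matrix). -/
def vN {n : Type*} [Fintype n] [DecidableEq n] (ρ : Matrix n n ℂ) : ℝ :=
  if h : ρ.IsHermitian then -∑ i, h.eigenvalues i * Real.logb 2 (h.eigenvalues i) else 0

/-- Partial trace over the second subsystem. -/
def trB {α β : Type*} [Fintype β] (ρ : Matrix (α × β) (α × β) ℂ) : Matrix α α ℂ :=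
  Matrix.of fun i j => ∑ k, ρ (i, k) (j, k)

/-- Partial trace over the first subsystem. -/
def trA {α β : Type*} [Fintype α] (ρ : Matrix (α × β) (α × β) ℂ) : Matrix β β ℂ :=
  Matrix.of fun i j => ∑ k, ρ (k, i) (k, j)

/-- Classical mutual information `I(X:Y)` of a joint distribution `P`. -/
def mi {α β : Type*} [Fintype α] [Fintype β] (P : α → β → ℝ) : ℝ :=
  shannon (fun a => ∑ b, P a b) + shannon (fun b => ∑ a, P a b)
    - shannon (fun ab : α × β => P ab.1 ab.2)

/-- The Holevo quantity `χ` of the ensemble `{p x, ρ x}`. -/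
def holevo {X n : Type*} [Fintype X] [Fintype n] [DecidableEq n]
    (p : X → ℝ) (ρ : X → Matrix n n ℂ) : ℝ :=
  vN (∑ x, (p x : ℂ) • ρ x) - ∑ x, p x * vN (ρ x)

/-- The rank-one projector `|u⟩⟨u|` onto a vector `u`. -/
def proj {n : Type*} (u : n → ℂ) : Matrix n n ℂ :=
  Matrix.vecMulVec u (star u)

/-- A density matrix: positive semidefinite with unit trace. -/
def IsState {n : Type*} [Fintype n] (ρ : Matrix n n ℂ) : Prop :=
  ρ.PosSemidef ∧ ρ.trace = 1

/-- Quantum mutual information of a bipartite state, `S(ρ_A) + S(ρ_B) - S(ρ_AB)`. -/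
def qmi {α β : Type*} [Fintype α] [DecidableEq α] [Fintype β] [DecidableEq β]
    (ρ : Matrix (α × β) (α × β) ℂ) : ℝ :=
  vN (trB ρ) + vN (trA ρ) - vN ρ

/-- A (finite-depth, adaptive) LOCC measurement protocol on a bipartite system `A ⊗ B`:
a tree of alternating local measurements, where each local measurement is given by
Kraus operators and each branch may depend on all previous outcomes
(which are communicated classically). -/
inductive LOCC (A B : Type) [Fintype A] [DecidableEq A] [Fintype B] [DecidableEq B] : Type
  | finish : LOCC A B
  | alice (k : ℕ) (V : Fin k → Matrix A A ℂ)
      (hV : ∑ a, (V a)ᴴ * V a = 1)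
      (next : Fin k → LOCC A B) : LOCC A B
  | bob (k : ℕ) (W : Fin k → Matrix B B ℂ)
      (hW : ∑ b, (W b)ᴴ * W b = 1)
      (next : Fin k → LOCC A B) : LOCC A B

namespace LOCC

variable {A B : Type} [Fintype A] [DecidableEq A] [Fintype B] [DecidableEq B]

/-- The possible (complete) outcome records of an LOCC protocol. -/
def records : LOCC A B → Finset (List ℕ)
  | .finish => {[]}
  | .alice k _ _ next =>
      Finset.univ.biUnion fun a : Fin k => (records (next a)).image (List.cons a.val)
  | .bob k _ _ next =>
      Finset.univ.biUnion fun b : Fin k => (records (next b)).image (List.cons b.val)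

/-- The probability that a given LOCC protocol, applied to the state `ρ`, produces the
outcome record `r` (computed via unnormalized post-measurement states). -/
def outP : LOCC A B → Matrix (A × B) (A × B) ℂ → List ℕ → ℝ
  | .finish, ρ, [] => ρ.trace.re
  | .finish, _, _ :: _ => 0
  | .alice k V _ next, ρ, a :: l =>
      if h : a < k then
        outP (next ⟨a, h⟩)
          ((V ⟨a, h⟩ ⊗ₖ (1 : Matrix B B ℂ)) * ρ * (V ⟨a, h⟩ ⊗ₖ (1 : Matrix B B ℂ))ᴴ) l
      else 0
  | .alice _ _ _ _, _, [] => 0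
  | .bob k W _ next, ρ, b :: l =>
      if h : b < k then
        outP (next ⟨b, h⟩)
          (((1 : Matrix A A ℂ) ⊗ₖ W ⟨b, h⟩) * ρ * ((1 : Matrix A A ℂ) ⊗ₖ W ⟨b, h⟩)ᴴ) l
      else 0
  | .bob _ _ _ _, _, [] => 0

/-- The classical mutual information between the signal label of the ensemble `{p x, ρ x}`
and the full record of outcomes of the LOCC protocol `P`. -/
def info {X : Type*} [Fintype X] (P : LOCC A B) (p : X → ℝ)
    (ρ : X → Matrix (A × B) (A × B) ℂ) : ℝ :=
  shannon p
    + (-∑ r ∈ P.records, (∑ x, p x * P.outP (ρ x) r)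
          * Real.logb 2 (∑ x, p x * P.outP (ρ x) r))
    - (-∑ x, ∑ r ∈ P.records, (p x * P.outP (ρ x) r)
          * Real.logb 2 (p x * P.outP (ρ x) r))

end LOCC

/-- Entanglement of formation: minimal average entanglement (entropy of the reduction)
over pure-state decompositions. -/
def EoF {A B : Type*} [Fintype A] [DecidableEq A] [Fintype B] [DecidableEq B]
    (ρ : Matrix (A × B) (A × B) ℂ) : ℝ :=
  sInf { e | ∃ (k : ℕ) (q : Fin k → ℝ) (ψ : Fin k → (A × B → ℂ)),
    (∀ i, 0 ≤ q i) ∧ (∑ i, q i = 1) ∧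
    (∀ i, ∑ v, Complex.normSq (ψ i v) = 1) ∧
    ρ = ∑ i, (q i : ℂ) • proj (ψ i) ∧
    e = ∑ i, q i * vN (trB (proj (ψ i))) }

open scoped Classical in
/-- Matrix logarithm (base 2) of a Hermitian matrix, via the spectral decomposition
(with the convention `log 0 = 0`). -/
def matLog2 {n : Type*} [Fintype n] [DecidableEq n] (ρ : Matrix n n ℂ) : Matrix n n ℂ :=
  if h : ρ.IsHermitian then
    (h.eigenvectorUnitary : Matrix n n ℂ)
      * Matrix.diagonal (fun i => (Real.logb 2 (h.eigenvalues i) : ℂ))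
      * (star (h.eigenvectorUnitary : Matrix n n ℂ))
  else 0

/-- Quantum relative entropy (base 2), `S(ρ‖σ) = tr(ρ log₂ ρ − ρ log₂ σ)`. -/
def relEnt {n : Type*} [Fintype n] [DecidableEq n] (ρ σ : Matrix n n ℂ) : ℝ :=
  (Matrix.trace (ρ * matLog2 ρ - ρ * matLog2 σ)).re

/-- Separability of a bipartite state across the `A : B` cut. -/
def IsSep {A B : Type*} [Fintype A] [DecidableEq A] [Fintype B] [DecidableEq B]
    (σ : Matrix (A × B) (A × B) ℂ) : Prop :=
  ∃ (k : ℕ) (w : Fin k → ℝ) (ζA : Fin k → Matrix A A ℂ) (ζB : Fin k → Matrix B B ℂ),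
    (∀ i, 0 ≤ w i) ∧ (∑ i, w i = 1) ∧
    (∀ i, IsState (ζA i)) ∧ (∀ i, IsState (ζB i)) ∧
    σ = ∑ i, (w i : ℂ) • (ζA i ⊗ₖ ζB i)

/-- Relative entropy of entanglement across the `A : B` cut. -/
def REE {A B : Type*} [Fintype A] [DecidableEq A] [Fintype B] [DecidableEq B]
    (σ : Matrix (A × B) (A × B) ℂ) : ℝ :=
  sInf { r | ∃ ζ : Matrix (A × B) (A × B) ℂ, IsState ζ ∧ IsSep ζ ∧ r = relEnt σ ζ }

/-- Reshuffle a state of `(A ⊗ B) ⊗ (C ⊗ D)` into a state of `(A ⊗ C) ⊗ (B ⊗ D)`,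
exhibiting the `AC : BD` cut. -/
def toACBD {A B C D : Type*} (ρ : Matrix ((A × B) × (C × D)) ((A × B) × (C × D)) ℂ) :
    Matrix ((A × C) × (B × D)) ((A × C) × (B × D)) ℂ :=
  ρ.submatrix (fun x => ((x.1.1, x.2.1), (x.1.2, x.2.2)))
    (fun x => ((x.1.1, x.2.1), (x.1.2, x.2.2)))

/-- Binary entropy (base 2). -/
def binEnt (p : ℝ) : ℝ := -(p * Real.logb 2 p) - (1 - p) * Real.logb 2 (1 - p)

end LAI

namespace LAI

/-- The four orthonormal two-qubit states `a₁|00⟩+a₂|11⟩`, `−a₂|00⟩+a₁|11⟩`,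
`a₁|01⟩+a₂|10⟩`, `−a₂|01⟩+a₁|10⟩`. -/
def fourStates (a₁ a₂ : ℝ) (x : Fin 4) : Fin 2 × Fin 2 → ℂ := fun ij =>
  if x.val = 0 then (if ij = (0, 0) then (a₁ : ℂ) else if ij = (1, 1) then (a₂ : ℂ) else 0)
  else if x.val = 1 then
    (if ij = (0, 0) then -(a₂ : ℂ) else if ij = (1, 1) then (a₁ : ℂ) else 0)
  else if x.val = 2 then
    (if ij = (0, 1) then (a₁ : ℂ) else if ij = (1, 0) then (a₂ : ℂ) else 0)
  else (if ij = (0, 1) then -(a₂ : ℂ) else if ij = (1, 0) then (a₁ : ℂ) else 0)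


lemma trace_eq_sum_eig {n : Type*} [Fintype n] [DecidableEq n] {A : Matrix n n ℂ}
    (hA : A.IsHermitian) : A.trace = ∑ i, (hA.eigenvalues i : ℂ) := by
  conv_lhs => rw [hA.spectral_theorem]
  rw [Unitary.conjStarAlgAut_apply]
  rw [Matrix.trace_mul_cycle,
    show (star (hA.eigenvectorUnitary : Matrix n n ℂ)) * (hA.eigenvectorUnitary : Matrix n n ℂ) = 1
      from Unitary.coe_star_mul_self _]
  simp [Matrix.trace_diagonal]

lemma vN_diag_two (p : ℝ) : vN (Matrix.diagonal ![(p:ℂ), ((1-p):ℂ)]) = binEnt p := by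
  have hH : Matrix.IsHermitian (Matrix.diagonal ![(p:ℂ), ((1-p):ℂ)]) := by
    apply Matrix.isHermitian_diagonal_of_self_adjoint
    show star _ = _
    funext i; fin_cases i <;> simp
  rw [vN, dif_pos hH]
  have htr := trace_eq_sum_eig hH
  simp only [Matrix.trace_diagonal, Fin.sum_univ_two] at htr
  have hs : hH.eigenvalues 0 + hH.eigenvalues 1 = 1 := by
    have h1 : ((hH.eigenvalues 0 + hH.eigenvalues 1 : ℝ) : ℂ) = ((1:ℝ) : ℂ) := by
      push_cast
      simp at htr
      linear_combination -htr
    exact_mod_cast h1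
  have hdet := hH.det_eq_prod_eigenvalues
  simp only [Matrix.det_diagonal, Fin.prod_univ_two] at hdet
  have hd : hH.eigenvalues 0 * hH.eigenvalues 1 = p * (1-p) := by
    have h1 : ((hH.eigenvalues 0 * hH.eigenvalues 1 : ℝ) : ℂ) = ((p * (1-p) : ℝ) : ℂ) := by
      push_cast
      simp at hdet
      linear_combination -hdet
    exact_mod_cast h1
  have h1 : hH.eigenvalues 1 = 1 - hH.eigenvalues 0 := by linarith
  have h0 : hH.eigenvalues 0 = p ∨ hH.eigenvalues 0 = 1 - p := by
    have : (hH.eigenvalues 0 - p) * (hH.eigenvalues 0 - (1 - p)) = 0 := by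
      rw [h1] at hd; nlinarith [hd]
    rcases mul_eq_zero.mp this with h | h
    · left; linarith
    · right; linarith
  rw [Fin.sum_univ_two, h1]
  rcases h0 with h | h <;> rw [h] <;> unfold binEnt <;> ring_nf

lemma binEnt_sym (p : ℝ) : binEnt (1 - p) = binEnt p := by
  unfold binEnt
  rw [sub_sub_cancel]
  ring

lemma logb_four : Real.logb 2 (4:ℝ) = 2 := by
  rw [show (4:ℝ) = 2^(2:ℕ) by norm_num, Real.logb_pow]
  simp

lemma logb_quarter : Real.logb 2 (1/4 : ℝ) = -2 := by
  rw [show (1/4 : ℝ) = ((2:ℝ)^(2:ℕ))⁻¹ by norm_num, Real.logb_inv, Real.logb_pow]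
  simp

lemma quarter_log (t : ℝ) (ht : 0 ≤ t) :
    (1/4*t) * Real.logb 2 (1/4*t) = 1/4*(t*Real.logb 2 t) - 1/2*t := by
  rcases ht.eq_or_lt with h | h
  · simp [← h]
  · rw [Real.logb_mul (by norm_num) h.ne', logb_quarter]
    ring

/-- **Saturation of the bound in `2 ⊗ 2`.** Measuring each qubit of the uniform ensemble
of the four states in the computational basis (outcome `(i,j)` with probability
`|⟨ij|ψ⟩|²`) gives classical mutual information `2 − h(a₁²)`, while each signal state has
entanglement `h(a₁²)`: the ensemble saturates `I_acc^LOCC ≤ n − Ē` with `n = 2`,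
`Ē = h(a₁²)`. -/
theorem four_states_saturate_bound (a₁ a₂ : ℝ) (h : a₁ ^ 2 + a₂ ^ 2 = 1) :
    mi (fun (x : Fin 4) (ij : Fin 2 × Fin 2) =>
        (1 / 4 : ℝ) * Complex.normSq (fourStates a₁ a₂ x ij)) = 2 - binEnt (a₁ ^ 2) ∧
    ∀ x, vN (trB (proj (fourStates a₁ a₂ x))) = binEnt (a₁ ^ 2) := by
  have h2 : a₂ ^ 2 = 1 - a₁ ^ 2 := by linarith
  constructor
  · have hA : shannon (fun x : Fin 4 => ∑ ij : Fin 2 × Fin 2,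
        (1/4:ℝ) * Complex.normSq (fourStates a₁ a₂ x ij)) = 2 := by
      have hm1 : (fun x : Fin 4 => ∑ ij : Fin 2 × Fin 2,
          (1/4:ℝ) * Complex.normSq (fourStates a₁ a₂ x ij)) = fun _ => (1/4:ℝ) := by
        funext x
        fin_cases x <;>
          · simp (config := { decide := true }) [fourStates, Fintype.sum_prod_type,
              Fin.sum_univ_two, Complex.normSq_ofReal]
            nlinarith [h]
      rw [hm1, shannon]
      simp [Fin.sum_univ_four, logb_quarter, logb_four]
    have hB : shannon (fun ij : Fin 2 × Fin 2 => ∑ x : Fin 4,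
        (1/4:ℝ) * Complex.normSq (fourStates a₁ a₂ x ij)) = 2 := by
      have hm2 : (fun ij : Fin 2 × Fin 2 => ∑ x : Fin 4,
          (1/4:ℝ) * Complex.normSq (fourStates a₁ a₂ x ij)) = fun _ => (1/4:ℝ) := by
        funext ij
        obtain ⟨i, j⟩ := ij
        fin_cases i <;> fin_cases j <;>
          · simp (config := { decide := true }) [fourStates, Fin.sum_univ_four,
              Complex.normSq_ofReal]
            nlinarith [h]
      rw [hm2, shannon]
      simp [Fintype.sum_prod_type, Fin.sum_univ_two, logb_quarter, logb_four]
    have hC : shannon (fun ab : Fin 4 × (Fin 2 × Fin 2) =>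
        (1/4:ℝ) * Complex.normSq (fourStates a₁ a₂ ab.1 ab.2)) = 2 + binEnt (a₁^2) := by
      rw [shannon, Fintype.sum_prod_type]
      simp (config := { decide := true }) [fourStates, Fin.sum_univ_four,
        Fintype.sum_prod_type, Fin.sum_univ_two, Complex.normSq_ofReal, Complex.normSq_neg,
        Complex.normSq_zero]
      have hq : ∀ t : ℝ, 0 ≤ t →
          ((4:ℝ)⁻¹*t) * Real.logb 2 ((4:ℝ)⁻¹*t) = 4⁻¹*(t*Real.logb 2 t) - 2⁻¹*t := by
        intro t ht
        have := quarter_log t ht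
        norm_num at this ⊢
        linarith [this]
      rw [hq (a₁*a₁) (mul_self_nonneg a₁), hq (a₂*a₂) (mul_self_nonneg a₂),
        show a₁*a₁ = a₁^2 by ring, show a₂*a₂ = a₂^2 by ring, h2]
      unfold binEnt
      ring
    rw [mi, hA, hB, hC]
    ring
  · intro x
    have e0 : trB (proj (fourStates a₁ a₂ x)) =
        (if x.val = 0 ∨ x.val = 2 then Matrix.diagonal ![((a₁^2:ℝ):ℂ), 1 - ((a₁^2:ℝ):ℂ)]
         else Matrix.diagonal ![((1-a₁^2:ℝ):ℂ), 1 - ((1-a₁^2:ℝ):ℂ)]) := by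
      have hc : ((a₂:ℂ))^2 = 1 - ((a₁:ℂ))^2 := by exact_mod_cast congrArg (Complex.ofReal) h2
      fin_cases x <;>
        · ext i j
          fin_cases i <;> fin_cases j <;>
            simp (config := { decide := true }) [trB, proj, fourStates, Matrix.vecMulVec_apply,
              Fin.sum_univ_two, Matrix.diagonal] <;>
            push_cast <;>
            first
              | linear_combination hc
              | linear_combination -hc
              | ring
    rw [e0]
    split
    · rw [vN_diag_two]
    · rw [vN_diag_two, binEnt_sym]

end LAI
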